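/- (Theorem 1, inequality part.) Let A be a nonempty finite set of treatments, let (X, μ) be a probability (measure) space, and for each a ∈ A let f_a : X → ℝ be an integrable measurable function. Let 𝒢 be a grouping of A and let 𝒢̃ be a grouping of A that is finer than 𝒢. Then V*(𝒢̃) ≥ V*(𝒢), where V*(𝒢) = ∫ max_{G ∈ 𝒢} |G|⁻¹ ∑_{a ∈ G} f_a(x) dμ(x). -/

import Mathlib

/-!
Pointwise in `x`: a group of the coarser grouping is the disjoint union of the finer groups it
contains, so its average is a weighted average of their averages and hence at most the largest
of them. Integrating this pointwise inequality gives the theorem.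
-/

open MeasureTheory

noncomputable def avgOn {α : Type*} (v : α → ℝ) (G : Finset α) : ℝ :=
  (G.card : ℝ)⁻¹ * ∑ a ∈ G, v a

noncomputable def groupMax {α : Type*} (𝒢 : Finset (Finset α)) (g : Finset α → ℝ) : ℝ :=
  if h : 𝒢.Nonempty then 𝒢.sup' h g else 0

def IsGrouping {α : Type*} [DecidableEq α] (A : Finset α) (𝒢 : Finset (Finset α)) : Prop :=
  (∀ G ∈ 𝒢, G.Nonempty) ∧
  (∀ G ∈ 𝒢, ∀ G' ∈ 𝒢, G ≠ G' → Disjoint G G') ∧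
  𝒢.biUnion id = A

def Finer {α : Type*} (𝒢' 𝒢 : Finset (Finset α)) : Prop :=
  ∀ G' ∈ 𝒢', ∃ G ∈ 𝒢, G' ⊆ G

noncomputable def optVal {α X : Type*} [MeasurableSpace X] (μ : Measure X)
    (f : α → X → ℝ) (𝒢 : Finset (Finset α)) : ℝ :=
  ∫ x, groupMax 𝒢 (fun G => avgOn (fun a => f a x) G) ∂μ

open Finset

section Averages

variable {α : Type*} {v : α → ℝ} {M : ℝ}

theorem avgOn_le_iff {G : Finset α} (hG : G.Nonempty) :
    avgOn v G ≤ M ↔ ∑ a ∈ G, v a ≤ G.card * M := by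
  rw [avgOn, inv_mul_le_iff₀ (by exact_mod_cast hG.card_pos)]

theorem avgOn_biUnion_le [DecidableEq α] {S : Finset (Finset α)}
    (hdisj : (S : Set (Finset α)).PairwiseDisjoint id) (hne : ∀ P ∈ S, P.Nonempty)
    (hS : (S.biUnion id).Nonempty) (hM : ∀ P ∈ S, avgOn v P ≤ M) :
    avgOn v (S.biUnion id) ≤ M := by
  rw [avgOn_le_iff hS, sum_biUnion hdisj, card_biUnion hdisj, Nat.cast_sum, sum_mul]
  exact sum_le_sum fun P hP => (avgOn_le_iff (hne P hP)).1 (hM P hP)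

end Averages

namespace IsGrouping

variable {α : Type*} [DecidableEq α] {A : Finset α} {𝒢 𝒢' : Finset (Finset α)}

theorem subset (h𝒢 : IsGrouping A 𝒢) {G : Finset α} (hG : G ∈ 𝒢) : G ⊆ A := by
  rw [← h𝒢.2.2]
  exact subset_biUnion_of_mem id hG

theorem pairwiseDisjoint (h𝒢 : IsGrouping A 𝒢) : (𝒢 : Set (Finset α)).PairwiseDisjoint id :=
  fun G hG G' hG' hne => h𝒢.2.1 G hG G' hG' hne

theorem nonempty_iff (h𝒢 : IsGrouping A 𝒢) : 𝒢.Nonempty ↔ A.Nonempty := by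
  rw [← h𝒢.2.2, biUnion_nonempty]
  exact ⟨fun ⟨G, hG⟩ => ⟨G, hG, h𝒢.1 G hG⟩, fun ⟨G, hG, _⟩ => ⟨G, hG⟩⟩

theorem eq_biUnion_filter_subset (h𝒢 : IsGrouping A 𝒢) (h𝒢' : IsGrouping A 𝒢')
    (hfiner : Finer 𝒢' 𝒢) {G : Finset α} (hG : G ∈ 𝒢) :
    G = (𝒢'.filter (· ⊆ G)).biUnion id := by
  refine Subset.antisymm (fun a ha => ?_) (biUnion_subset.2 fun P hP => (mem_filter.1 hP).2)
  obtain ⟨P, hP, haP⟩ := mem_biUnion.1 (h𝒢'.2.2 ▸ h𝒢.subset hG ha)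
  obtain ⟨G₀, hG₀, hPG₀⟩ := hfiner P hP
  have hG₀G : G₀ = G := by
    by_contra hne
    exact disjoint_left.1 (h𝒢.2.1 G₀ hG₀ G hG hne) (hPG₀ haP) ha
  exact mem_biUnion.2 ⟨P, mem_filter.2 ⟨hP, hG₀G ▸ hPG₀⟩, haP⟩

theorem avgOn_le_sup'_of_finer (h𝒢 : IsGrouping A 𝒢) (h𝒢' : IsGrouping A 𝒢')
    (hfiner : Finer 𝒢' 𝒢) (h' : 𝒢'.Nonempty) (v : α → ℝ) {G : Finset α} (hG : G ∈ 𝒢) :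
    avgOn v G ≤ 𝒢'.sup' h' (avgOn v) := by
  have hcov := h𝒢.eq_biUnion_filter_subset h𝒢' hfiner hG
  rw [hcov]
  exact avgOn_biUnion_le (h𝒢'.pairwiseDisjoint.subset (filter_subset _ _))
    (fun P hP => h𝒢'.1 P (mem_filter.1 hP).1) (hcov ▸ h𝒢.1 G hG)
    (fun P hP => le_sup' _ (mem_filter.1 hP).1)

theorem groupMax_avgOn_le_of_finer (h𝒢 : IsGrouping A 𝒢) (h𝒢' : IsGrouping A 𝒢')
    (hfiner : Finer 𝒢' 𝒢) (v : α → ℝ) :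
    groupMax 𝒢 (avgOn v) ≤ groupMax 𝒢' (avgOn v) := by
  have hiff : 𝒢.Nonempty ↔ 𝒢'.Nonempty := h𝒢.nonempty_iff.trans h𝒢'.nonempty_iff.symm
  by_cases h : 𝒢.Nonempty
  · rw [groupMax, groupMax, dif_pos h, dif_pos (hiff.1 h)]
    exact sup'_le _ _ fun G hG => h𝒢.avgOn_le_sup'_of_finer h𝒢' hfiner (hiff.1 h) v hG
  · rw [groupMax, groupMax, dif_neg h, dif_neg (hiff.not.1 h)]

end IsGrouping

section Integrability

variable {α X : Type*} [MeasurableSpace X] {μ : Measure X}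

theorem integrable_avgOn {f : α → X → ℝ} {G : Finset α} (hf : ∀ a ∈ G, Integrable (f a) μ) :
    Integrable (fun x => avgOn (fun a => f a x) G) μ :=
  (integrable_finsetSum G hf).const_mul _

theorem integrable_groupMax {𝒢 : Finset (Finset α)} {g : Finset α → X → ℝ}
    (hg : ∀ G ∈ 𝒢, Integrable (g G) μ) :
    Integrable (fun x => groupMax 𝒢 (fun G => g G x)) μ := by
  unfold groupMax
  split_ifs with h
  · rw [show (fun x => 𝒢.sup' h fun G => g G x) = 𝒢.sup' h g from
      funext fun x => (Finset.sup'_apply h g x).symm]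
    exact sup'_induction h g (p := (Integrable · μ)) (fun _ hφ _ hψ => hφ.sup hψ) hg
  · exact integrable_zero _ _ _

end Integrability

theorem optVal_le_of_finer_general {α X : Type*} [DecidableEq α] [MeasurableSpace X]
    (μ : Measure X)
    (A : Finset α)
    (f : α → X → ℝ)
    (hint : ∀ a ∈ A, Integrable (f a) μ)
    (𝒢 𝒢' : Finset (Finset α))
    (h𝒢 : IsGrouping A 𝒢) (h𝒢' : IsGrouping A 𝒢')
    (hfiner : Finer 𝒢' 𝒢) :
    optVal μ f 𝒢 ≤ optVal μ f 𝒢' :=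
  integral_mono
    (integrable_groupMax fun _ hG => integrable_avgOn fun a ha => hint a (h𝒢.subset hG ha))
    (integrable_groupMax fun _ hG => integrable_avgOn fun a ha => hint a (h𝒢'.subset hG ha))
    fun x => h𝒢.groupMax_avgOn_le_of_finer h𝒢' hfiner (fun a => f a x)

/-- Theorem 1 (inequality part): a finer grouping never decreases the optimal value. -/
theorem optVal_le_of_finer {α X : Type*} [DecidableEq α] [MeasurableSpace X]
    (μ : Measure X) [IsProbabilityMeasure μ]
    (A : Finset α) (hA : A.Nonempty)
    (f : α → X → ℝ)
    (hmeas : ∀ a ∈ A, Measurable (f a))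
    (hint : ∀ a ∈ A, Integrable (f a) μ)
    (𝒢 𝒢' : Finset (Finset α))
    (h𝒢 : IsGrouping A 𝒢) (h𝒢' : IsGrouping A 𝒢')
    (hfiner : Finer 𝒢' 𝒢) :
    optVal μ f 𝒢 ≤ optVal μ f 𝒢' :=
  optVal_le_of_finer_general μ A f hint 𝒢 𝒢' h𝒢 h𝒢' hfiner
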